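/- Let X ⊆ ℝ^n be a nonempty compact convex set and R an n×n real matrix with xᵀR x = 0 for every x ∈ X. Let {x^t, x̂^t}_{t≥1} be the sequences produced by the OGD updates on X with matrix R and step size η satisfying 0 < η ≤ min{1/(8‖R‖²), 1}. Then for every T ≥ 1, the time average x̄ := (1/T)·Σ_{s=1}^T x^s is a (D²/(ηT))-approximate symmetric Nash equilibrium of the symmetric game (R,R); that is, x̄ᵀR x̄ ≤ xᵀR x̄ + D²/(ηT) for all x ∈ X, where D is the Euclidean diameter of X. -/

import Mathlib

open Finset

noncomputable section

/-- The bilinear form `xᵀ R y` on Euclidean space. -/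
def quadForm {n : ℕ} (R : Matrix (Fin n) (Fin n) ℝ)
    (x y : EuclideanSpace ℝ (Fin n)) : ℝ :=
  ∑ i, ∑ j, x i * R i j * y j

/-- The ℓ2 operator norm of a matrix. -/
def l2OpNorm {ι : Type} [Fintype ι] [DecidableEq ι] (R : Matrix ι ι ℝ) : ℝ :=
  ‖Matrix.toEuclideanCLM (𝕜 := ℝ) R‖

/-- The sequences `x^t, x̂^t` are produced by the OGD updates on `X` with
matrix `R` and step size `η`. -/
def IsOGD {n : ℕ} (X : Set (EuclideanSpace ℝ (Fin n)))
    (R : Matrix (Fin n) (Fin n) ℝ) (η : ℝ)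
    (x xh : ℕ → EuclideanSpace ℝ (Fin n)) : Prop :=
  x 0 ∈ X ∧ xh 1 ∈ X ∧
  (∀ t : ℕ, 1 ≤ t → x t ∈ X ∧ ∀ y ∈ X,
    η * quadForm R (x t) (x (t - 1)) + (1 / 2) * ‖x t - xh t‖ ^ 2 ≤
      η * quadForm R y (x (t - 1)) + (1 / 2) * ‖y - xh t‖ ^ 2) ∧
  (∀ t : ℕ, 1 ≤ t → xh (t + 1) ∈ X ∧ ∀ y ∈ X,
    η * quadForm R (xh (t + 1)) (x t) + (1 / 2) * ‖xh (t + 1) - xh t‖ ^ 2 ≤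
      η * quadForm R y (x t) + (1 / 2) * ‖y - xh t‖ ^ 2)

/-! ### Auxiliary lemmas -/

lemma quadForm_eq_inner {n : ℕ} (R : Matrix (Fin n) (Fin n) ℝ)
    (u v : EuclideanSpace ℝ (Fin n)) :
    quadForm R u v = inner ℝ u ((Matrix.toEuclideanCLM (𝕜 := ℝ) R) v) := by
  simp only [quadForm, PiLp.inner_apply, RCLike.inner_apply, starRingEnd_apply, star_trivial]
  have : ∀ i, (Matrix.toEuclideanCLM (𝕜 := ℝ) R) v i = ∑ j, R i j * v j := by
    intro i
    rfl
  simp only [this, Finset.mul_sum, Finset.sum_mul]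
  congr 1; ext i; congr 1; ext j; ring

lemma abs_quadForm_le {n : ℕ} (R : Matrix (Fin n) (Fin n) ℝ)
    (u v : EuclideanSpace ℝ (Fin n)) :
    |quadForm R u v| ≤ l2OpNorm R * ‖u‖ * ‖v‖ := by
  rw [quadForm_eq_inner]
  calc |inner ℝ u ((Matrix.toEuclideanCLM (𝕜 := ℝ) R) v)|
      ≤ ‖u‖ * ‖(Matrix.toEuclideanCLM (𝕜 := ℝ) R) v‖ := abs_real_inner_le_norm _ _
    _ ≤ ‖u‖ * (l2OpNorm R * ‖v‖) := by
        gcongr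
        exact ContinuousLinearMap.le_opNorm _ _
    _ = l2OpNorm R * ‖u‖ * ‖v‖ := by ring

lemma quadForm_sub_left {n : ℕ} (R : Matrix (Fin n) (Fin n) ℝ)
    (u w v : EuclideanSpace ℝ (Fin n)) :
    quadForm R (u - w) v = quadForm R u v - quadForm R w v := by
  simp only [quadForm, PiLp.sub_apply, ← Finset.sum_sub_distrib]
  congr 1; ext i; congr 1; ext j; ring

lemma quadForm_sub_right {n : ℕ} (R : Matrix (Fin n) (Fin n) ℝ)
    (u v w : EuclideanSpace ℝ (Fin n)) :
    quadForm R u (v - w) = quadForm R u v - quadForm R u w := by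
  simp only [quadForm, PiLp.sub_apply, ← Finset.sum_sub_distrib]
  congr 1; ext i; congr 1; ext j; ring

lemma quadForm_smul_left {n : ℕ} (R : Matrix (Fin n) (Fin n) ℝ) (c : ℝ)
    (u v : EuclideanSpace ℝ (Fin n)) :
    quadForm R (c • u) v = c * quadForm R u v := by
  simp only [quadForm, PiLp.smul_apply, smul_eq_mul, Finset.mul_sum]
  congr 1; ext i; congr 1; ext j; ring

lemma quadForm_add_left {n : ℕ} (R : Matrix (Fin n) (Fin n) ℝ)
    (u w v : EuclideanSpace ℝ (Fin n)) :
    quadForm R (u + w) v = quadForm R u v + quadForm R w v := by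
  simp only [quadForm, PiLp.add_apply, ← Finset.sum_add_distrib]
  congr 1; ext i; congr 1; ext j; ring

lemma quadForm_smul_right {n : ℕ} (R : Matrix (Fin n) (Fin n) ℝ) (c : ℝ)
    (u v : EuclideanSpace ℝ (Fin n)) :
    quadForm R u (c • v) = c * quadForm R u v := by
  simp only [quadForm, PiLp.smul_apply, smul_eq_mul, Finset.mul_sum]
  congr 1; ext i; congr 1; ext j; ring

lemma quadForm_add_right {n : ℕ} (R : Matrix (Fin n) (Fin n) ℝ)
    (u v w : EuclideanSpace ℝ (Fin n)) :
    quadForm R u (v + w) = quadForm R u v + quadForm R u w := by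
  simp only [quadForm, PiLp.add_apply, ← Finset.sum_add_distrib]
  congr 1; ext i; congr 1; ext j; ring

lemma quadForm_sum_right {n : ℕ} (R : Matrix (Fin n) (Fin n) ℝ)
    (u : EuclideanSpace ℝ (Fin n)) {α : Type*} (s : Finset α)
    (f : α → EuclideanSpace ℝ (Fin n)) :
    quadForm R u (∑ a ∈ s, f a) = ∑ a ∈ s, quadForm R u (f a) := by
  classical
  induction s using Finset.induction with
  | empty => simp [quadForm]
  | insert a s h ih =>
    rw [Finset.sum_insert h, Finset.sum_insert h, ← ih, quadForm_add_right]

/-- Strong optimality condition for a minimizer of a linear-plus-quadratic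
objective over a convex set. -/
lemma strong_opt {E : Type*} [NormedAddCommGroup E] [InnerProductSpace ℝ E]
    {X : Set E} (hX : Convex ℝ X) (q : E → ℝ)
    (hq : ∀ (c : ℝ) (u v : E), q (u + c • (v - u)) = q u + c * (q v - q u))
    {z xs : E} (hxs : xs ∈ X)
    (hmin : ∀ w ∈ X, q xs + (1/2) * ‖xs - z‖^2 ≤ q w + (1/2) * ‖w - z‖^2)
    {y : E} (hy : y ∈ X) :
    q xs + (1/2) * ‖xs - z‖^2 + (1/2) * ‖y - xs‖^2 ≤ q y + (1/2) * ‖y - z‖^2 := by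
  set d := y - xs with hd
  have key : ∀ lam : ℝ, 0 < lam → lam ≤ 1 →
      0 ≤ lam * (q y - q xs) + lam * (inner ℝ (xs - z) d : ℝ) + lam^2/2 * ‖d‖^2 := by
    intro lam h0 h1
    have hw : xs + lam • d ∈ X := by
      have := hX hxs hy (by linarith : (0:ℝ) ≤ 1 - lam) (le_of_lt h0) (by ring)
      have he : (1 - lam) • xs + lam • y = xs + lam • d := by
        rw [hd]; module
      rwa [he] at this
    have hm := hmin _ hw
    have hql : q (xs + lam • d) = q xs + lam * (q y - q xs) := hq lam xs y
    have hnorm : ‖xs + lam • d - z‖^2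
        = ‖xs - z‖^2 + 2 * lam * (inner ℝ (xs - z) d : ℝ) + lam^2 * ‖d‖^2 := by
      have : xs + lam • d - z = (xs - z) + lam • d := by abel
      rw [this, norm_add_sq_real, real_inner_smul_right, norm_smul]
      simp [mul_pow, abs_of_pos h0]
      ring
    rw [hql, hnorm] at hm
    nlinarith [hm]
  have hL : 0 ≤ (q y - q xs) + (inner ℝ (xs - z) d : ℝ) := by
    by_contra hc
    push_neg at hc
    set L := (q y - q xs) + (inner ℝ (xs - z) d : ℝ) with hLdef
    have hden : (0:ℝ) < ‖d‖^2 + 1 := by positivity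
    set lam := min 1 (-L / (‖d‖^2 + 1)) with hlam
    have hlam0 : 0 < lam := by
      apply lt_min one_pos
      apply div_pos (by linarith) hden
    have hlam1 : lam ≤ 1 := min_le_left _ _
    have hlam2 : lam * (‖d‖^2 + 1) ≤ -L := by
      have := min_le_right 1 (-L / (‖d‖^2 + 1))
      calc lam * (‖d‖^2 + 1) ≤ (-L / (‖d‖^2 + 1)) * (‖d‖^2 + 1) := by
            apply mul_le_mul_of_nonneg_right this (le_of_lt hden)
        _ = -L := by field_simp
    have hk := key lam hlam0 hlam1
    nlinarith [hk, mul_pos hlam0 hlam0, sq_nonneg ‖d‖]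
  have hy2 : ‖y - z‖^2 = ‖xs - z‖^2 + 2 * (inner ℝ (xs - z) d : ℝ) + ‖d‖^2 := by
    have : y - z = (xs - z) + d := by rw [hd]; abel
    rw [this, norm_add_sq_real]
  have hyd : ‖y - xs‖ = ‖d‖ := by rw [hd]
  rw [hyd, hy2]
  linarith


/-- Purely arithmetic core of the per-step inequality. -/
lemma per_step_arith (η c Qyx Qhx Qxp Qhp a1 a0 b v w0 w1 nc : ℝ)
    (hη : 0 < η) (hη1 : η ≤ 1) (hηc : η * c ^ 2 ≤ 1/8) (hc : 0 ≤ c)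
    (ha1 : 0 ≤ a1) (ha0 : 0 ≤ a0) (hb : 0 ≤ b) (hv0 : 0 ≤ v)
    (hA : η * Qhx + (1/2) * nc^2 + (1/2) * w1^2 ≤ η * Qyx + (1/2) * w0^2)
    (hB : η * Qxp + (1/2) * b^2 + (1/2) * a1^2 ≤ η * Qhp + (1/2) * nc^2)
    (hcross : η * ((0 - Qxp) - (Qhx - Qhp)) ≤ η * (c * a1 * v))
    (hvle : v ≤ b + a0) :
    (1/2) * w1^2 + (1/4) * a1^2 - ((1/2) * w0^2 + (1/4) * a0^2) ≤ η * Qyx := by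
  have h2' : η * (c * a1 * v) ≤ (1/4) * a1^2 + (η * c)^2 * v^2 := by
    nlinarith [sq_nonneg (a1/2 - η * c * v)]
  have h3' : (η * c)^2 * v^2 ≤ (η/8) * v^2 := by
    have : (η * c)^2 ≤ η/8 := by nlinarith
    exact mul_le_mul_of_nonneg_right this (sq_nonneg _)
  have h4' : v^2 ≤ 2 * b^2 + 2 * a0^2 := by nlinarith [sq_nonneg (b - a0)]
  have h5' : (η/8) * v^2 ≤ (1/4) * b^2 + (1/4) * a0^2 := by nlinarith
  have hx : η * ((0 - Qxp) - (Qhx - Qhp)) ≤ (1/4) * a1^2 + (1/4) * b^2 + (1/4) * a0^2 := by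
    linarith
  have e1 : η * ((0 - Qxp) - (Qhx - Qhp)) = - (η * Qxp) - η * Qhx + η * Qhp := by ring
  rw [e1] at hx
  linarith [sq_nonneg b, hA, hB, hx]

/-- The core of the proof of Theorem 1: the time average
`x̄ = (1/T)Σ_{s=1}^T x^s` is a `D²/(ηT)`-approximate symmetric Nash
equilibrium of the symmetric game `(R,R)`: `x̄ᵀ R x̄ ≤ xᵀ R x̄ + D²/(ηT)` for
all `x ∈ X`, where `D` is the Euclidean diameter of `X`. -/
theorem ogd_time_average_eps_nash {n : ℕ} (X : Set (EuclideanSpace ℝ (Fin n)))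
    (hXne : X.Nonempty) (hXcp : IsCompact X) (hXconv : Convex ℝ X)
    (R : Matrix (Fin n) (Fin n) ℝ)
    (hzero : ∀ x ∈ X, quadForm R x x = 0)
    (η : ℝ) (hη : 0 < η) (hη' : η ≤ min (1 / (8 * l2OpNorm R ^ 2)) 1)
    (x xh : ℕ → EuclideanSpace ℝ (Fin n)) (hogd : IsOGD X R η x xh) :
    ∀ T : ℕ, 1 ≤ T → ∀ y ∈ X,
      quadForm R ((T : ℝ)⁻¹ • ∑ s ∈ Finset.Icc 1 T, x s)
          ((T : ℝ)⁻¹ • ∑ s ∈ Finset.Icc 1 T, x s)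
        ≤ quadForm R y ((T : ℝ)⁻¹ • ∑ s ∈ Finset.Icc 1 T, x s)
            + Metric.diam X ^ 2 / (η * T) := by
  intro T hT y hy
  obtain ⟨h0, h1, hx, hxh⟩ := hogd
  set D := Metric.diam X with hDdef
  have hD0 : 0 ≤ D := Metric.diam_nonneg
  have hdist : ∀ u ∈ X, ∀ v ∈ X, ‖u - v‖ ≤ D := by
    intro u hu v hv
    rw [← dist_eq_norm]
    exact Metric.dist_le_diam_of_mem hXcp.isBounded hu hv
  have hη1 : η ≤ 1 := le_trans hη' (min_le_right _ _)
  have hRnn : 0 ≤ l2OpNorm R := norm_nonneg _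
  have hηR2 : η * l2OpNorm R ^ 2 ≤ 1 / 8 := by
    rcases eq_or_lt_of_le hRnn with hR | hR
    · rw [← hR]; norm_num
    · have h8 : (0:ℝ) < 8 * l2OpNorm R ^ 2 := by positivity
      have := le_trans hη' (min_le_left _ _)
      rw [le_div_iff₀ h8] at this
      linarith
  -- the potential function
  set Ψ : ℕ → ℝ := fun t => (1/2) * ‖y - xh t‖^2 + (1/4) * ‖x (t-1) - xh t‖^2 with hΨ
  -- linearity hypothesis for strong_opt
  have hqlin : ∀ p : EuclideanSpace ℝ (Fin n), ∀ (c : ℝ) (u v : EuclideanSpace ℝ (Fin n)),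
      (fun w => η * quadForm R w p) (u + c • (v - u))
        = (fun w => η * quadForm R w p) u
          + c * ((fun w => η * quadForm R w p) v - (fun w => η * quadForm R w p) u) := by
    intro p c u v
    simp only [quadForm_add_left, quadForm_smul_left, quadForm_sub_left]
    ring
  -- per-step inequality
  have step : ∀ t : ℕ, 1 ≤ t → Ψ (t+1) - Ψ t ≤ η * quadForm R y (x t) := by
    intro t ht
    have hxt : x t ∈ X := (hx t ht).1
    have hxht1 : xh (t+1) ∈ X := (hxh t ht).1
    have hA := strong_opt hXconv (fun w => η * quadForm R w (x t)) (hqlin (x t))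
      hxht1 (fun w hw => (hxh t ht).2 w hw) hy
    have hB := strong_opt hXconv (fun w => η * quadForm R w (x (t-1))) (hqlin (x (t-1)))
      hxt (fun w hw => (hx t ht).2 w hw) hxht1
    rw [norm_sub_rev (xh (t+1)) (x t)] at hB
    have hz : quadForm R (x t) (x t) = 0 := hzero _ hxt
    -- cross term bound
    have hcross : η * ((0 - quadForm R (x t) (x (t-1)))
          - (quadForm R (xh (t+1)) (x t) - quadForm R (xh (t+1)) (x (t-1))))
        ≤ η * (l2OpNorm R * ‖x t - xh (t+1)‖ * ‖x t - x (t-1)‖) := by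
      have h := le_of_abs_le (abs_quadForm_le R (x t - xh (t+1)) (x t - x (t-1)))
      rw [quadForm_sub_left, quadForm_sub_right, quadForm_sub_right, hz] at h
      exact mul_le_mul_of_nonneg_left h (le_of_lt hη)
    have hvle : ‖x t - x (t-1)‖ ≤ ‖x t - xh t‖ + ‖x (t-1) - xh t‖ := by
      have h := dist_triangle (x t) (xh t) (x (t-1))
      rw [dist_eq_norm, dist_eq_norm, dist_eq_norm, norm_sub_rev (xh t) (x (t-1))] at h
      exact h
    have hΨt1 : Ψ (t+1) = (1/2) * ‖y - xh (t+1)‖^2 + (1/4) * ‖x t - xh (t+1)‖^2 := by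
      rw [hΨ]
      simp only [Nat.add_sub_cancel]
    have hΨt : Ψ t = (1/2) * ‖y - xh t‖^2 + (1/4) * ‖x (t-1) - xh t‖^2 := rfl
    rw [hΨt1, hΨt]
    exact per_step_arith η (l2OpNorm R) (quadForm R y (x t)) (quadForm R (xh (t+1)) (x t))
      (quadForm R (x t) (x (t-1))) (quadForm R (xh (t+1)) (x (t-1)))
      ‖x t - xh (t+1)‖ ‖x (t-1) - xh t‖ ‖x t - xh t‖ ‖x t - x (t-1)‖
      ‖y - xh t‖ ‖y - xh (t+1)‖ ‖xh (t+1) - xh t‖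
      hη hη1 hηR2 hRnn (norm_nonneg _) (norm_nonneg _) (norm_nonneg _) (norm_nonneg _)
      hA hB hcross hvle
  -- telescoping
  have tele : ∀ S : ℕ, 1 ≤ S → Ψ (S+1) - Ψ 1 ≤ ∑ t ∈ Finset.Icc 1 S, η * quadForm R y (x t) := by
    intro S hS
    induction S, hS using Nat.le_induction with
    | base => simpa using step 1 le_rfl
    | succ S hS ih =>
      rw [Finset.sum_Icc_succ_top (by omega : 1 ≤ S + 1)]
      have := step (S+1) (by omega)
      linarith
  have hΨ1 : Ψ 1 ≤ (3/4) * D^2 := by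
    have h1' : ‖y - xh 1‖ ≤ D := hdist _ hy _ h1
    have h2' : ‖x 0 - xh 1‖ ≤ D := hdist _ h0 _ h1
    have hn1 : (0:ℝ) ≤ ‖y - xh 1‖ := norm_nonneg _
    have hn2 : (0:ℝ) ≤ ‖x 0 - xh 1‖ := norm_nonneg _
    have : Ψ 1 = (1/2) * ‖y - xh 1‖^2 + (1/4) * ‖x 0 - xh 1‖^2 := rfl
    rw [this]
    nlinarith
  have hΨT : 0 ≤ Ψ (T+1) := by
    have : Ψ (T+1) = (1/2) * ‖y - xh (T+1)‖^2 + (1/4) * ‖x (T+1-1) - xh (T+1)‖^2 := rfl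
    rw [this]; positivity
  clear_value Ψ D
  have hsum : -(D^2) ≤ ∑ t ∈ Finset.Icc 1 T, η * quadForm R y (x t) := by
    have h := tele T hT
    nlinarith [h, hΨ1, hΨT, sq_nonneg D]
  -- x̄ ∈ X
  have hTpos : (0:ℝ) < (T:ℝ) := by exact_mod_cast hT
  have hxbar : (T : ℝ)⁻¹ • ∑ s ∈ Finset.Icc 1 T, x s ∈ X := by
    rw [Finset.smul_sum]
    apply hXconv.sum_mem
    · intro i _; positivity
    · rw [Finset.sum_const, Nat.card_Icc]
      simp only [Nat.add_sub_cancel, nsmul_eq_mul]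
      field_simp
    · intro i hi
      exact (hx i (Finset.mem_Icc.mp hi).1).1
  rw [hzero _ hxbar]
  -- evaluate quadForm R y x̄
  have hval : quadForm R y ((T : ℝ)⁻¹ • ∑ s ∈ Finset.Icc 1 T, x s)
      = (T:ℝ)⁻¹ * ∑ t ∈ Finset.Icc 1 T, quadForm R y (x t) := by
    rw [quadForm_smul_right, quadForm_sum_right]
  rw [hval]
  have hS : -(D^2) ≤ η * ∑ t ∈ Finset.Icc 1 T, quadForm R y (x t) := by
    rw [Finset.mul_sum]
    exact hsum
  have hsum' : -(D^2) / η ≤ ∑ t ∈ Finset.Icc 1 T, quadForm R y (x t) := by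
    rw [div_le_iff₀ hη]
    nlinarith [hS]
  have h2 : (T:ℝ)⁻¹ * (-(D^2)/η) ≤ (T:ℝ)⁻¹ * ∑ t ∈ Finset.Icc 1 T, quadForm R y (x t) :=
    mul_le_mul_of_nonneg_left hsum' (le_of_lt (inv_pos.mpr hTpos))
  have heq0 : (T:ℝ)⁻¹ * (D^2/η) = D^2 / (η * T) := by
    rw [mul_comm ((T:ℝ)⁻¹) (D^2/η), ← div_eq_mul_inv, div_div]
  have heq : (T:ℝ)⁻¹ * (-(D^2)/η) = -(D^2 / (η * T)) := by
    rw [neg_div, mul_neg, heq0]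
  linarith [h2, heq.le, heq.ge]
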